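/- arXiv:2603.21179 — 2 statements merged into one kernel-verified Lean document; each statement's English description precedes it below -/
import Mathlib

section
/- Let f, g ∈ ℂ[z] be polynomials of degree d ≥ 2. If f and g are intertwined, or f and ḡ are intertwined, then 𝓛_f = 𝓛_g. -/
open Polynomial

noncomputable section

/-- The `n`-th iterate `f^{∘n}` of a polynomial under composition, with `f^{∘0} = X`. -/
def iterComp {R : Type*} [CommSemiring R] (f : Polynomial R) : ℕ → Polynomial R
  | 0 => Polynomial.X
  | n + 1 => f.comp (iterComp f n)

/-- Two polynomials `f` and `g` are intertwined if there are an integer `n ≥ 1` and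
nonconstant polynomials `S, h₁, h₂` with `f^{∘n} ∘ h₁ = h₁ ∘ S` and `g^{∘n} ∘ h₂ = h₂ ∘ S`. -/
def Intertwined {R : Type*} [CommSemiring R] (f g : Polynomial R) : Prop :=
  ∃ (n : ℕ) (S h₁ h₂ : Polynomial R),
    0 < n ∧ 0 < S.natDegree ∧ 0 < h₁.natDegree ∧ 0 < h₂.natDegree ∧
    (iterComp f n).comp h₁ = h₁.comp S ∧ (iterComp g n).comp h₂ = h₂.comp S

/-- The forward orbit of `z` under a complex polynomial `f` is bounded;
equivalently, `z` lies in the filled Julia set `K(f)`. -/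
def BoundedOrbit (f : Polynomial ℂ) (z : ℂ) : Prop :=
  ∃ M : ℝ, ∀ n : ℕ, ‖(fun w => f.eval w)^[n] z‖ ≤ M

/-- The Green function (escape-rate function) of a polynomial `f` of degree `d ≥ 2`:
`g_f(z) = lim_{n→∞} d^{-n} log⁺ |f^{∘n}(z)|`. -/
def greenFn (f : Polynomial ℂ) (z : ℂ) : ℝ :=
  Filter.limUnder Filter.atTop fun n : ℕ =>
    ((f.natDegree : ℝ) ^ n)⁻¹ * Real.log (max 1 (‖(fun w => f.eval w)^[n] z‖))

/-- The Lyapunov exponent of `f` given by Przytycki's formula: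
`𝓛_f = log d + Σ_c g_f(c)`, summing over the roots of `f'` with multiplicity. -/
def lyap (f : Polynomial ℂ) : ℝ :=
  Real.log (f.natDegree : ℝ) + (f.derivative.roots.map (greenFn f)).sum

/-- The polynomial obtained by applying complex conjugation to every coefficient of `f`. -/
def conjPoly (f : Polynomial ℂ) : Polynomial ℂ := f.map (starRingEnd ℂ)

/-- `f` and `g` are affinely conjugate: `f ∘ L = L ∘ g` for an affine map `L(z) = az + b`, `a ≠ 0`. -/
def AffineConj {K : Type*} [Field K] (f g : Polynomial K) : Prop :=
  ∃ a b : K, a ≠ 0 ∧ f.comp (C a * X + C b) = (C a * X + C b).comp g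

/-- `T` is the normalized degree-`d` Chebyshev polynomial: the monic polynomial of degree `d`
satisfying `T(z + z⁻¹) = z^d + z^{-d}`. -/
def IsNormalizedChebyshev {K : Type*} [Field K] (d : ℕ) (T : Polynomial K) : Prop :=
  T.Monic ∧ T.natDegree = d ∧ ∀ z : K, z ≠ 0 → T.eval (z + z⁻¹) = z ^ d + (z⁻¹) ^ d

/-- A polynomial of degree `d` is exceptional if it is affinely conjugate to `z^d` or to `±T_d`. -/
def Exceptional {K : Type*} [Field K] (d : ℕ) (f : Polynomial K) : Prop :=
  AffineConj f (X ^ d) ∨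
    ∃ T : Polynomial K, IsNormalizedChebyshev d T ∧ (AffineConj f T ∨ AffineConj f (-T))

/-- A fixed algebraic closure `ℚ̄` of `ℚ`. -/
abbrev Qbar := AlgebraicClosure ℚ

/-- The least common multiple of the denominators of the coefficients of a rational polynomial. -/
def denomLcm (p : Polynomial ℚ) : ℕ :=
  (Finset.range (p.natDegree + 1)).lcm fun i => (p.coeff i).den

/-- The absolute logarithmic Weil height of an algebraic number `x ∈ ℚ̄`, via the Mahler-measure
formula: `h(x) = (1/n) log (D ∏ᵢ max(1,|xᵢ|))` where `n` is the degree of the minimal polynomial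
of `x` over `ℚ`, `D` is the lcm of the denominators of its coefficients (so that `D·minpoly` is
the primitive integer minimal polynomial), and the `xᵢ` are the complex conjugates of `x`. -/
def weilHeight (x : Qbar) : ℝ :=
  ((minpoly ℚ x).natDegree : ℝ)⁻¹ *
    Real.log ((denomLcm (minpoly ℚ x) : ℝ) *
      (((minpoly ℚ x).map (algebraMap ℚ ℂ)).roots.map fun α => max 1 (‖α‖)).prod)

/-- The canonical height `ĥ_f(a) = lim_{n→∞} d^{-n} h(f^{∘n}(a))` of `a ∈ ℚ̄` for a polynomial
`f ∈ ℚ̄[z]` of degree `d ≥ 2`. -/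
def canHeight (f : Polynomial Qbar) (a : Qbar) : ℝ :=
  Filter.limUnder Filter.atTop fun n : ℕ =>
    ((f.natDegree : ℝ) ^ n)⁻¹ * weilHeight ((fun w => f.eval w)^[n] a)

/-- The critical height `ĥ_crit(f) = Σ_c ĥ_f(c)`, summing over the roots of `f'` in `ℚ̄`
counted with multiplicity. -/
def critHeight (f : Polynomial Qbar) : ℝ :=
  (f.derivative.roots.map (canHeight f)).sum

end

/-!
The Green function is the uniform limit of `d⁻ⁿ log⁺ |fⁿ|`, since
`log⁺ |p(w)| - deg p · log⁺ |w|` is bounded for every polynomial `p`. Consequently a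
semiconjugacy `F ∘ h = h ∘ S` gives `g_F ∘ h = deg h · g_S`, and `g_{fⁿ} = g_f`.
Differentiating `F ∘ h = h ∘ S` and summing `g_S` over the roots of both sides, where each root
`a` of `P` has exactly `deg q` preimages under `q` among the roots of `P ∘ q`, shows that the
critical sums `Σ_{F'(c) = 0} g_F(c)` and `Σ_{S'(c) = 0} g_S(c)` agree; for `F = fⁿ` the chain
rule turns the first into `n · Σ_{f'(c) = 0} g_f(c)`. Two polynomials intertwined through a common
`S` therefore have the same critical sum, and conjugating the coefficients preserves `𝓛`.
-/

open Filter Topology Asymptotics Bornology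
open scoped Real

section PosLog

variable {α E F : Type*} [SeminormedAddCommGroup E] [SeminormedAddCommGroup F]
  {l : Filter α} {u : α → E} {v : α → F}

theorem Asymptotics.IsBigO.exists_eventually_posLog_norm_le (h : u =O[l] v) :
    ∃ C, ∀ᶠ x in l, log⁺ ‖u x‖ ≤ C + log⁺ ‖v x‖ := by
  obtain ⟨c, hc⟩ := h.bound
  refine ⟨log⁺ c, hc.mono fun x hx => ?_⟩
  calc log⁺ ‖u x‖ ≤ log⁺ (c * ‖v x‖) := Real.posLog_le_posLog (norm_nonneg _) hx
    _ ≤ log⁺ c + log⁺ ‖v x‖ := Real.posLog_mul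

theorem Asymptotics.IsTheta.posLog_norm_sub_isBigO_one (h : u =Θ[l] v) :
    (fun x => log⁺ ‖u x‖ - log⁺ ‖v x‖) =O[l] (1 : α → ℝ) := by
  obtain ⟨C, hC⟩ := h.isBigO.exists_eventually_posLog_norm_le
  obtain ⟨C', hC'⟩ := h.isBigO_symm.exists_eventually_posLog_norm_le
  refine IsBigO.of_bound (max C C') ((hC.and hC').mono fun x ⟨hx, hx'⟩ => ?_)
  rw [Pi.one_apply, norm_one, mul_one, Real.norm_eq_abs, abs_le]
  constructor <;> linarith [le_max_left C C', le_max_right C C']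

end PosLog

namespace Polynomial

theorem exists_abs_posLog_norm_eval_sub_le {K : Type*} [NormedField K] [ProperSpace K]
    (p : K[X]) : ∃ C, ∀ w : K, |log⁺ ‖p.eval w‖ - p.natDegree * log⁺ ‖w‖| ≤ C := by
  rcases eq_or_ne p 0 with rfl | hp
  · exact ⟨0, by simp⟩
  have hΘ : (fun w => p.eval w) =Θ[cobounded K] (· ^ p.natDegree) :=
    isEquivalent_cobounded_leading_monomial.isTheta.trans
      ((isTheta_const_mul_left (leadingCoeff_ne_zero.mpr hp)).mpr (isTheta_refl _ _))
  have hcont : Continuous fun w : K => log⁺ ‖p.eval w‖ - p.natDegree * log⁺ ‖w‖ := by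
    fun_prop
  have hbdd := (hcont.isBounded_range_iff_isBigO).mpr <| by
    rw [← Metric.cobounded_eq_cocompact]
    simpa only [norm_pow, Real.posLog_pow] using hΘ.posLog_norm_sub_isBigO_one
  obtain ⟨C, hC⟩ := isBounded_iff_forall_norm_le.mp hbdd
  exact ⟨C, fun w => hC _ ⟨w, rfl⟩⟩

section IterComp

variable {R : Type*} [CommSemiring R] (f : R[X])

theorem iterComp_eq_iterate (n : ℕ) : iterComp f n = f.comp^[n] X := by
  induction n with
  | zero => rfl
  | succ n ih => rw [iterComp, ih, Function.iterate_succ_apply']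

theorem iterComp_succ' (n : ℕ) : iterComp f (n + 1) = (iterComp f n).comp f := by
  induction n with
  | zero => simp [iterComp]
  | succ n ih =>
    show f.comp (iterComp f (n + 1)) = (f.comp (iterComp f n)).comp f
    rw [ih, comp_assoc]

theorem eval_iterComp (n : ℕ) (z : R) : (iterComp f n).eval z = (fun w => f.eval w)^[n] z := by
  rw [iterComp_eq_iterate, iterate_comp_eval, eval_X]

theorem natDegree_iterComp [NoZeroDivisors R] [Nontrivial R] (n : ℕ) :
    (iterComp f n).natDegree = f.natDegree ^ n := by
  rw [iterComp_eq_iterate, natDegree_iterate_comp, natDegree_X, mul_one]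

end IterComp

theorem natDegree_eq_of_semiconj {R : Type*} [Semiring R] [NoZeroDivisors R] {F h S : R[X]}
    (hh : 0 < h.natDegree) (hFhS : F.comp h = h.comp S) : S.natDegree = F.natDegree := by
  have := congrArg natDegree hFhS
  rw [natDegree_comp, natDegree_comp, mul_comm] at this
  exact Nat.eq_of_mul_eq_mul_left hh this.symm

theorem comp_ne_zero {R : Type*} [Semiring R] [NoZeroDivisors R] {p q : R[X]} (hp : p ≠ 0)
    (hq : 0 < q.natDegree) : p.comp q ≠ 0 := by
  rw [Ne, comp_eq_zero_iff, not_or, not_and_or]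
  refine ⟨hp, Or.inr fun h => ?_⟩
  rw [h, natDegree_C] at hq
  exact hq.false

section Roots

variable {K : Type*} [Field K]

theorem roots_derivative_comp [CharZero K] {p q : K[X]} (hp : 0 < p.natDegree)
    (hq : 0 < q.natDegree) :
    (p.comp q).derivative.roots = q.derivative.roots + (p.derivative.comp q).roots := by
  rw [derivative_comp, roots_mul]
  exact mul_ne_zero (derivative_ne_zero.mpr hq.ne')
    (comp_ne_zero (derivative_ne_zero.mpr hp.ne') hq)

variable [IsAlgClosed K]

theorem roots_comp {p q : K[X]} (hp : p ≠ 0) (hq : 0 < q.natDegree) :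
    (p.comp q).roots = p.roots.bind fun a => (q - C a).roots := by
  have hfiber : ∀ a, q - C a ≠ 0 := fun a h => by
    rw [← natDegree_sub_C (a := a), h, natDegree_zero] at hq
    exact hq.false
  conv_lhs =>
    rw [← C_leadingCoeff_mul_prod_multiset_X_sub_C (p := p) IsAlgClosed.card_roots_eq_natDegree]
  rw [mul_comp, C_comp, multiset_prod_comp, Multiset.map_map,
    roots_C_mul _ (leadingCoeff_ne_zero.mpr hp), roots_multiset_prod, Multiset.bind_map]
  · simp [sub_comp]
  · simp [sub_comp, hfiber]

theorem sum_map_roots_comp {M : Type*} [Field M] [CharZero M] {p q : K[X]} (hp : p ≠ 0)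
    (hq : 0 < q.natDegree) {φ ψ : K → M} (h : ∀ z, ψ (q.eval z) = q.natDegree * φ z) :
    ((p.comp q).roots.map φ).sum = (p.roots.map ψ).sum := by
  rw [roots_comp hp hq, Multiset.map_bind, Multiset.sum_bind]
  refine congrArg _ (Multiset.map_congr rfl fun a _ => ?_)
  have hq' : (q.natDegree : M) ≠ 0 := by exact_mod_cast hq.ne'
  have hφ : ∀ z ∈ (q - C a).roots, φ z = ψ a / q.natDegree := fun z hz => by
    rw [mem_roots', IsRoot, eval_sub, eval_C, sub_eq_zero] at hz
    rw [← hz.2, h, mul_div_cancel_left₀ _ hq']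
  rw [Multiset.map_congr rfl hφ, Multiset.map_const', Multiset.sum_replicate,
    IsAlgClosed.card_roots_eq_natDegree, natDegree_sub_C, nsmul_eq_mul, mul_div_cancel₀ _ hq']

end Roots

end Polynomial

noncomputable def greenApprox (p : ℂ[X]) (z : ℂ) (n : ℕ) : ℝ :=
  ((p.natDegree : ℝ) ^ n)⁻¹ * log⁺ ‖(fun w => p.eval w)^[n] z‖

theorem greenFn_eq_limUnder (p : ℂ[X]) (z : ℂ) :
    greenFn p z = limUnder atTop (greenApprox p z) := by
  unfold greenFn greenApprox
  simp only [Real.posLog_eq_log_max_one (norm_nonneg _)]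

theorem tendsto_greenApprox {p : ℂ[X]} (hp : 2 ≤ p.natDegree) (z : ℂ) :
    Tendsto (greenApprox p z) atTop (𝓝 (greenFn p z)) := by
  obtain ⟨C, hC⟩ := p.exists_abs_posLog_norm_eval_sub_le
  set d : ℝ := (p.natDegree : ℝ)
  have hd : 1 < d := Nat.one_lt_cast.mpr hp
  have hstep : ∀ n, dist (greenApprox p z n) (greenApprox p z (n + 1)) ≤ C / d * d⁻¹ ^ n := by
    intro n
    set w := (fun w => p.eval w)^[n] z
    have hdiff : greenApprox p z n - greenApprox p z (n + 1)
        = (d ^ (n + 1))⁻¹ * -(log⁺ ‖p.eval w‖ - d * log⁺ ‖w‖) := by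
      rw [greenApprox, greenApprox, Function.iterate_succ_apply']
      field_simp
      ring
    rw [Real.dist_eq, hdiff, abs_mul, abs_neg, abs_of_pos (by positivity)]
    calc (d ^ (n + 1))⁻¹ * |log⁺ ‖p.eval w‖ - d * log⁺ ‖w‖| ≤ (d ^ (n + 1))⁻¹ * C :=
          mul_le_mul_of_nonneg_left (hC w) (by positivity)
      _ = C / d * d⁻¹ ^ n := by rw [pow_succ', mul_inv, inv_pow]; ring
  obtain ⟨G, hG⟩ := cauchySeq_tendsto_of_complete
    (cauchySeq_of_le_geometric _ _ (inv_lt_one_of_one_lt₀ hd) hstep)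
  rwa [greenFn_eq_limUnder, hG.limUnder_eq]

theorem greenFn_eval_of_semiconj {F h S : ℂ[X]} (hF : 2 ≤ F.natDegree)
    (hS : S.natDegree = F.natDegree) (hFhS : F.comp h = h.comp S) (z : ℂ) :
    greenFn F (h.eval z) = h.natDegree * greenFn S z := by
  obtain ⟨C, hC⟩ := h.exists_abs_posLog_norm_eval_sub_le
  set d : ℝ := (F.natDegree : ℝ)
  have hd : 1 < d := Nat.one_lt_cast.mpr hF
  have hsc : Function.Semiconj (fun w => h.eval w) (fun w => S.eval w) (fun w => F.eval w) :=
    fun w => by simpa using congrArg (eval w) hFhS.symm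
  have hdist : ∀ k, dist (h.natDegree * greenApprox S z k) (greenApprox F (h.eval z) k)
      ≤ C * d⁻¹ ^ k := by
    intro k
    set y := (fun w => S.eval w)^[k] z
    have hdiff : greenApprox F (h.eval z) k - h.natDegree * greenApprox S z k
        = (d ^ k)⁻¹ * (log⁺ ‖h.eval y‖ - h.natDegree * log⁺ ‖y‖) := by
      rw [greenApprox, greenApprox, ← hsc.iterate_right k z, hS]
      ring
    rw [Real.dist_eq, abs_sub_comm, hdiff, abs_mul, abs_of_pos (by positivity), inv_pow, mul_comm]
    exact mul_le_mul_of_nonneg_right (hC y) (by positivity)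
  refine tendsto_nhds_unique (tendsto_greenApprox hF _)
    (((tendsto_greenApprox (hS ▸ hF) z).const_mul _).congr_dist ?_)
  refine squeeze_zero (fun _ => dist_nonneg) hdist ?_
  simpa using (tendsto_pow_atTop_nhds_zero_of_lt_one (by positivity)
    (inv_lt_one_of_one_lt₀ hd)).const_mul C

theorem greenFn_eval {p : ℂ[X]} (hp : 2 ≤ p.natDegree) (z : ℂ) :
    greenFn p (p.eval z) = p.natDegree * greenFn p z :=
  greenFn_eval_of_semiconj hp rfl rfl z

theorem greenFn_iterComp {f : ℂ[X]} (hf : 2 ≤ f.natDegree) {n : ℕ} (hn : 0 < n) :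
    greenFn (iterComp f n) = greenFn f := by
  have hFn : 2 ≤ (iterComp f n).natDegree :=
    natDegree_iterComp f n ▸ hf.trans (Nat.le_self_pow hn.ne' _)
  have hsub : ∀ z k, greenApprox (iterComp f n) z k = greenApprox f z (n * k) := by
    intro z k
    simp only [greenApprox, natDegree_iterComp, eval_iterComp, ← Function.iterate_mul, pow_mul]
    push_cast
    rfl
  funext z
  refine tendsto_nhds_unique (tendsto_greenApprox hFn z) ?_
  exact ((tendsto_greenApprox hf z).comp (tendsto_id.const_mul_atTop' hn)).congr
    fun k => (hsub z k).symm

noncomputable def critGreen (f : ℂ[X]) : ℝ :=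
  (f.derivative.roots.map (greenFn f)).sum

theorem critGreen_eq_of_semiconj {F h S : ℂ[X]} (hF : 2 ≤ F.natDegree) (hh : 0 < h.natDegree)
    (hFhS : F.comp h = h.comp S) : critGreen F = critGreen S := by
  have hS : S.natDegree = F.natDegree := natDegree_eq_of_semiconj hh hFhS
  have hsum : ((F.comp h).derivative.roots.map (greenFn S)).sum
      = ((h.comp S).derivative.roots.map (greenFn S)).sum := by rw [hFhS]
  rw [roots_derivative_comp (p := F) (by omega) hh, roots_derivative_comp (q := S) hh (by omega),
    Multiset.map_add, Multiset.map_add, Multiset.sum_add, Multiset.sum_add,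
    sum_map_roots_comp (derivative_ne_zero.mpr (by omega)) hh
      (greenFn_eval_of_semiconj hF hS hFhS),
    sum_map_roots_comp (derivative_ne_zero.mpr hh.ne') (by omega)
      (greenFn_eval (hS ▸ hF))] at hsum
  unfold critGreen
  linarith

theorem sum_greenFn_roots_derivative_iterComp {f : ℂ[X]} (hf : 2 ≤ f.natDegree) (n : ℕ) :
    ((iterComp f n).derivative.roots.map (greenFn f)).sum = n * critGreen f := by
  induction n with
  | zero => simp [iterComp]
  | succ n ih =>
    have hFn : 0 < (iterComp f n).natDegree := by
      rw [natDegree_iterComp]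
      positivity
    rw [iterComp_succ', roots_derivative_comp hFn (by omega), Multiset.map_add,
      Multiset.sum_add, sum_map_roots_comp (derivative_ne_zero.mpr hFn.ne') (by omega)
        (greenFn_eval hf), ih, critGreen]
    push_cast
    ring

theorem critGreen_iterComp {f : ℂ[X]} (hf : 2 ≤ f.natDegree) {n : ℕ} (hn : 0 < n) :
    critGreen (iterComp f n) = n * critGreen f := by
  rw [critGreen, greenFn_iterComp hf hn, sum_greenFn_roots_derivative_iterComp hf]

theorem Intertwined.lyap_eq {f g : ℂ[X]} (hf : 2 ≤ f.natDegree)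
    (hfg : f.natDegree = g.natDegree) (h : Intertwined f g) : lyap f = lyap g := by
  obtain ⟨n, S, h₁, h₂, hn, -, hh₁, hh₂, e₁, e₂⟩ := h
  have hg : 2 ≤ g.natDegree := hfg ▸ hf
  have hiter {p : ℂ[X]} (hp : 2 ≤ p.natDegree) : 2 ≤ (iterComp p n).natDegree :=
    natDegree_iterComp p n ▸ hp.trans (Nat.le_self_pow hn.ne' _)
  have hcrit : (n : ℝ) * critGreen f = n * critGreen g := by
    rw [← critGreen_iterComp hf hn, ← critGreen_iterComp hg hn,
      critGreen_eq_of_semiconj (hiter hf) hh₁ e₁, critGreen_eq_of_semiconj (hiter hg) hh₂ e₂]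
  change Real.log _ + critGreen f = Real.log _ + critGreen g
  rw [hfg, mul_left_cancel₀ (by positivity) hcrit]

theorem natDegree_conjPoly (g : ℂ[X]) : (conjPoly g).natDegree = g.natDegree :=
  natDegree_map_eq_of_injective (starRingEnd ℂ).injective g

theorem greenFn_conjPoly (g : ℂ[X]) (z : ℂ) :
    greenFn (conjPoly g) (starRingEnd ℂ z) = greenFn g z := by
  have hsc : Function.Semiconj (starRingEnd ℂ) (fun w => g.eval w)
      (fun w => (conjPoly g).eval w) := fun w => by
    simp [conjPoly, eval_map]
  unfold greenFn
  simp only [natDegree_conjPoly, ← hsc.iterate_right _ z, Complex.norm_conj]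

theorem lyap_conjPoly (g : ℂ[X]) : lyap (conjPoly g) = lyap g := by
  rw [lyap, lyap, natDegree_conjPoly, conjPoly, derivative_map,
    (IsAlgClosed.splits _).roots_map, Multiset.map_map]
  exact congrArg _ (congrArg _ (Multiset.map_congr rfl fun c _ => greenFn_conjPoly g c))

/-- For `f, g ∈ ℂ[z]` of degree `d ≥ 2`, if `f` and `g` are intertwined, or `f`
and `ḡ` are intertwined, then `𝓛_f = 𝓛_g`. -/
theorem lyap_eq_of_intertwined (d : ℕ) (hd : 2 ≤ d) (f g : Polynomial ℂ)
    (hfd : f.natDegree = d) (hgd : g.natDegree = d)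
    (h : Intertwined f g ∨ Intertwined f (conjPoly g)) :
    lyap f = lyap g := by
  rcases h with h | h
  · exact h.lyap_eq (hfd ▸ hd) (hfd.trans hgd.symm)
  · rw [← lyap_conjPoly g]
    exact h.lyap_eq (hfd ▸ hd) (by rw [natDegree_conjPoly, hfd, hgd])
end

section
/- For every integer d ≥ 2, there exist polynomials f, g ∈ ℚ̄[z] of degree d with 𝓛_f = 𝓛_g = log d such that f and g are not intertwined and f and ḡ are not intertwined. -/
open Polynomial

/-!
Take `f = X ^ d` and `g = T_d`, the normalized Chebyshev (Dickson) polynomial; `T_d` has rational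
coefficients, so `ḡ = g`. The critical point `0` of `f` is fixed, and every critical point of `T_d`
is `z + z⁻¹` with `|z| = 1`, whose orbit stays in `[-2, 2]`; so both Lyapunov exponents are `log d`.

Suppose `X ^ m ∘ h₁ = h₁ ∘ S` and `T_m ∘ h₂ = h₂ ∘ S`, where `m = d ^ n` and `T_m = T_d^{∘n}`.
Comparing root multiplicities at a root of `h₁` of maximal multiplicity shows
`S = l (X - a) ^ m + a`, which is affinely conjugate to `X ^ m`. Hence `T_m ∘ q = q ∘ X ^ m` for a
nonconstant `q`, and comparing multiplicities at `0` gives `T_m = l' (X - a') ^ m + a'`. Such a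
polynomial has a single critical point, which is fixed, while `T_m` has the critical point
`ζ + ζ⁻¹` (`ζ` a primitive `2m`-th root of unity) with critical value `-2 ≠ ζ + ζ⁻¹`.
-/

namespace Polynomial

section Multiplicity

variable {R : Type*} [CommRing R] [IsDomain R]

theorem rootMultiplicity_le_natDegree (p : R[X]) (a : R) : p.rootMultiplicity a ≤ p.natDegree := by
  classical
  rw [← count_roots]
  exact (Multiset.count_le_card _ _).trans (card_roots' p)

theorem eq_C_leadingCoeff_mul_X_sub_C_pow {p : R[X]} {a : R}
    (h : p.natDegree ≤ p.rootMultiplicity a) :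
    p = C p.leadingCoeff * (X - C a) ^ p.natDegree := by
  rcases eq_or_ne p 0 with rfl | hp
  · simp
  obtain ⟨u, hpu, -⟩ := p.exists_eq_pow_rootMultiplicity_mul_and_not_dvd hp a
  have hu : u ≠ 0 := by rintro rfl; exact hp (by simpa using hpu)
  have hdeg := congrArg natDegree hpu
  rw [natDegree_mul (pow_ne_zero _ (X_sub_C_ne_zero a)) hu, natDegree_pow, natDegree_X_sub_C,
    mul_one] at hdeg
  have hmult : p.rootMultiplicity a = p.natDegree :=
    le_antisymm (rootMultiplicity_le_natDegree p a) h
  rw [hmult] at hpu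
  have hu0 : u = C (u.coeff 0) := eq_C_of_natDegree_eq_zero (by omega)
  have hlead : p.leadingCoeff = u.coeff 0 := by
    rw [hpu, hu0, leadingCoeff_mul, leadingCoeff_C, ((monic_X_sub_C a).pow _).leadingCoeff,
      one_mul, coeff_C_zero]
  conv_lhs => rw [hpu, hu0]
  rw [hlead, mul_comm]

theorem rootMultiplicity_comp {p q : R[X]} {x : R} (hp : p ≠ 0) (hq : q - C (q.eval x) ≠ 0) :
    (p.comp q).rootMultiplicity x =
      p.rootMultiplicity (q.eval x) * (q - C (q.eval x)).rootMultiplicity x := by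
  set c := q.eval x
  obtain ⟨u, hpu, hu⟩ := p.exists_eq_pow_rootMultiplicity_mul_and_not_dvd hp c
  obtain ⟨v, hqv, hv⟩ := (q - C c).exists_eq_pow_rootMultiplicity_mul_and_not_dvd hq x
  have hux : (u.comp q).eval x ≠ 0 := by
    rw [eval_comp]; exact fun h => hu (dvd_iff_isRoot.mpr h)
  have hvx : v.eval x ≠ 0 := fun h => hv (dvd_iff_isRoot.mpr h)
  have hfactor : p.comp q = (v ^ p.rootMultiplicity c * u.comp q) *
      (X - C x) ^ (p.rootMultiplicity c * (q - C c).rootMultiplicity x) := by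
    conv_lhs => rw [hpu, mul_comp, pow_comp, sub_comp, X_comp, C_comp, hqv]
    ring
  have hcofactor : (v ^ p.rootMultiplicity c * u.comp q).eval x ≠ 0 := by
    rw [eval_mul, eval_pow]; exact mul_ne_zero (pow_ne_zero _ hvx) hux
  rw [hfactor, rootMultiplicity_mul_X_sub_C_pow (fun h => hcofactor (by rw [h, eval_zero])),
    rootMultiplicity_eq_zero hcofactor, zero_add]

theorem rootMultiplicity_zero_X_pow (m : ℕ) : rootMultiplicity 0 (X ^ m : R[X]) = m := by
  simpa using rootMultiplicity_X_sub_C_pow (0 : R) m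

theorem exists_forall_rootMultiplicity_le (p : R[X]) :
    ∃ b, ∀ x, p.rootMultiplicity x ≤ p.rootMultiplicity b := by
  classical
  obtain ⟨b, -, hb⟩ := (insert 0 p.roots.toFinset).exists_max_image (p.rootMultiplicity ·)
    (Finset.insert_nonempty _ _)
  refine ⟨b, fun x => ?_⟩
  by_cases hx : x ∈ p.roots
  · exact hb x (Finset.mem_insert_of_mem (Multiset.mem_toFinset.mpr hx))
  · rw [← count_roots, Multiset.count_eq_zero.mpr hx]
    exact Nat.zero_le _

theorem exists_eq_C_mul_X_sub_C_pow_add_C_eval_of_X_pow_comp_eq_comp {h S : R[X]} {m : ℕ}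
    (hm : 0 < m) (hS : S.natDegree = m) (E : (X ^ m).comp h = h.comp S) {b : R}
    (hb : 0 < h.rootMultiplicity b) (hmax : ∀ x, h.rootMultiplicity x ≤ h.rootMultiplicity b) :
    h.rootMultiplicity (S.eval b) = h.rootMultiplicity b ∧
      ∃ l, l ≠ 0 ∧ S = C l * (X - C b) ^ m + C (S.eval b) := by
  set a := S.eval b
  have hh : h ≠ 0 := by rintro rfl; simp at hb
  have hhb : h.eval b = 0 := (rootMultiplicity_pos hh).mp hb
  have hSa_deg : (S - C a).natDegree = m := by rw [natDegree_sub_C, hS]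
  have hSa : S - C a ≠ 0 := by rintro h0; rw [h0, natDegree_zero] at hSa_deg; omega
  have hmult : m * h.rootMultiplicity b = h.rootMultiplicity a * (S - C a).rootMultiplicity b := by
    have := rootMultiplicity_comp (pow_ne_zero m X_ne_zero) (x := b) (q := h)
      (by rw [hhb, C_0, sub_zero]; exact hh)
    rw [hhb, C_0, sub_zero, rootMultiplicity_zero_X_pow, E, rootMultiplicity_comp hh hSa] at this
    exact this.symm
  -- each factor on the right is bounded by the matching one on the left, so both are equalities
  have ha_le := hmax a
  have hSa_le : (S - C a).rootMultiplicity b ≤ m := hSa_deg ▸ rootMultiplicity_le_natDegree _ _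
  have hSa_eq : (S - C a).rootMultiplicity b = m := by nlinarith
  refine ⟨by nlinarith, (S - C a).leadingCoeff, leadingCoeff_ne_zero.mpr hSa, ?_⟩
  have hpow := eq_C_leadingCoeff_mul_X_sub_C_pow (hSa_deg.trans hSa_eq.symm).le
  rw [hSa_deg] at hpow
  rw [← hpow, sub_add_cancel]

theorem exists_eq_C_mul_X_sub_C_pow_add_C_of_comp_eq_comp_X_pow {G q : R[X]} {m : ℕ}
    (hm : 0 < m) (hG : G.natDegree = m) (hq : 0 < q.natDegree) (E : G.comp q = q.comp (X ^ m)) :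
    ∃ l a, l ≠ 0 ∧ G = C l * (X - C a) ^ m + C a := by
  set c := q.eval 0
  have hGc_deg : (G - C c).natDegree = m := by rw [natDegree_sub_C, hG]
  have hGc : G - C c ≠ 0 := by rintro h0; rw [h0, natDegree_zero] at hGc_deg; omega
  have hqc : q - C c ≠ 0 := by rintro h0; rw [← natDegree_sub_C (a := c), h0] at hq; simp at hq
  have hj : 0 < (q - C c).rootMultiplicity 0 := (rootMultiplicity_pos hqc).mpr (by simp [c])
  have hmult : (q - C c).rootMultiplicity 0 * (G - C c).rootMultiplicity c =
      (q - C c).rootMultiplicity 0 * m := by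
    have hcomp : (G - C c).comp q = (q - C c).comp (X ^ m) := by
      rw [sub_comp, sub_comp, C_comp, C_comp, E]
    have := congrArg (rootMultiplicity 0) hcomp
    rwa [rootMultiplicity_comp hGc hqc, rootMultiplicity_comp hqc (by
        rw [eval_pow, eval_X, zero_pow hm.ne', C_0, sub_zero]; exact pow_ne_zero m X_ne_zero),
      eval_pow, eval_X, zero_pow hm.ne', C_0, sub_zero, rootMultiplicity_zero_X_pow,
      mul_comm] at this
  have hpow := eq_C_leadingCoeff_mul_X_sub_C_pow
    (hGc_deg.trans (Nat.eq_of_mul_eq_mul_left hj hmult).symm).le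
  refine ⟨(G - C c).leadingCoeff, c, leadingCoeff_ne_zero.mpr hGc, ?_⟩
  rw [← hGc_deg, ← hpow, sub_add_cancel]

end Multiplicity

section CenteredPower

variable {K : Type*} [Field K]

section CharZero

variable [CharZero K]

theorem derivative_eval_C_mul_X_sub_C_pow_add_C_eq_zero_iff {l a b y : K} {m : ℕ} (hl : l ≠ 0)
    (hm : 2 ≤ m) : (C l * (X - C a) ^ m + C b).derivative.eval y = 0 ↔ y = a := by
  have hm0 : (m : K) ≠ 0 := by exact_mod_cast (by omega : m ≠ 0)
  simp only [derivative_add, derivative_C, add_zero, derivative_C_mul, derivative_X_sub_C_pow,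
    eval_mul, eval_C, eval_pow, eval_sub, eval_X, mul_eq_zero, hl, hm0, false_or,
    pow_eq_zero_iff (by omega : m - 1 ≠ 0), sub_eq_zero]

theorem eq_of_C_mul_X_sub_C_pow_add_C_eq {l l' a a' b b' : K} {m : ℕ} (hl' : l' ≠ 0)
    (hm : 2 ≤ m) (h : C l * (X - C a) ^ m + C b = C l' * (X - C a') ^ m + C b') :
    a = a' ∧ b = b' := by
  have ha : a = a' := by
    rw [← derivative_eval_C_mul_X_sub_C_pow_add_C_eq_zero_iff hl' hm (b := b'), ← h]
    simp [derivative_X_sub_C_pow, zero_pow (by omega : m - 1 ≠ 0)]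
  subst ha
  simpa [zero_pow (by omega : m ≠ 0)] using congrArg (eval a) h

theorem exists_eq_C_mul_X_sub_C_pow_add_C_of_X_pow_comp_eq_comp [IsAlgClosed K] {h S : K[X]}
    {m : ℕ} (hm : 2 ≤ m) (hh : 0 < h.natDegree) (E : (X ^ m).comp h = h.comp S) :
    ∃ l a, l ≠ 0 ∧ S = C l * (X - C a) ^ m + C a := by
  have hh0 : h ≠ 0 := by rintro rfl; simp at hh
  have hS : S.natDegree = m := by
    have := congrArg natDegree E
    rw [natDegree_comp, natDegree_comp, natDegree_X_pow, mul_comm] at this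
    exact (Nat.eq_of_mul_eq_mul_left hh this).symm
  obtain ⟨b, hmax⟩ := h.exists_forall_rootMultiplicity_le
  obtain ⟨r, hr⟩ := IsAlgClosed.exists_root h (natDegree_pos_iff_degree_pos.mp hh).ne'
  have hb : 0 < h.rootMultiplicity b := ((rootMultiplicity_pos hh0).mpr hr).trans_le (hmax r)
  obtain ⟨hab, l, hl, hSb⟩ :=
    exists_eq_C_mul_X_sub_C_pow_add_C_eval_of_X_pow_comp_eq_comp (by omega) hS E hb hmax
  -- the same at `S b`; uniqueness of the normal form then makes `b` a fixed point of `S`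
  obtain ⟨-, l', hl', hSa⟩ := exists_eq_C_mul_X_sub_C_pow_add_C_eval_of_X_pow_comp_eq_comp
    (by omega) hS E (hb.trans_eq hab.symm) fun x => (hmax x).trans_eq hab.symm
  obtain ⟨hba, -⟩ := eq_of_C_mul_X_sub_C_pow_add_C_eq hl' hm (hSb.symm.trans hSa)
  exact ⟨l, b, hl, by rwa [← hba] at hSb⟩

end CharZero

theorem affineConj_C_mul_X_sub_C_pow_add_C [IsAlgClosed K] {l a : K} {m : ℕ} (hl : l ≠ 0)
    (hm : 2 ≤ m) :
    AffineConj (C l * (X - C a) ^ m + C a) (X ^ m) := by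
  obtain ⟨β, hβ⟩ := IsAlgClosed.exists_pow_nat_eq l⁻¹ (by omega : 0 < m - 1)
  have hβ0 : β ≠ 0 := by rintro rfl; rw [zero_pow (by omega)] at hβ; exact inv_ne_zero hl hβ.symm
  have hlβ : l * β ^ m = β := by
    rw [← Nat.sub_add_cancel (by omega : 1 ≤ m), pow_succ, hβ, ← mul_assoc, mul_inv_cancel₀ hl,
      one_mul]
  refine ⟨β, a, hβ0, ?_⟩
  simp only [add_comp, mul_comp, C_comp, pow_comp, sub_comp, X_comp, add_sub_cancel_right,
    mul_pow, ← C_pow, ← mul_assoc, ← C_mul, hlβ]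

end CenteredPower

theorem iterComp_X_pow {R : Type*} [CommSemiring R] (d n : ℕ) :
    iterComp (X ^ d : R[X]) n = X ^ d ^ n := by
  induction n with
  | zero => simp [iterComp]
  | succ n ih => rw [iterComp, ih, X_pow_comp, ← pow_mul, pow_succ]

theorem iterComp_dickson_one_one {R : Type*} [CommRing R] (d n : ℕ) :
    iterComp (dickson 1 (1 : R) d) n = dickson 1 1 (d ^ n) := by
  induction n with
  | zero => simp [iterComp]
  | succ n ih => rw [iterComp, ih, ← dickson_one_one_mul, pow_succ']

theorem iterate_eval_eq_eval_iterComp {R : Type*} [CommSemiring R] (f : R[X]) (n : ℕ) (x : R) :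
    (fun w => f.eval w)^[n] x = (iterComp f n).eval x := by
  induction n with
  | zero => simp [iterComp]
  | succ n ih => rw [Function.iterate_succ_apply', ih, iterComp, eval_comp]

theorem natDegree_dickson_one_one {K : Type*} [Field K] [NeZero (2 : K)] (n : ℕ) :
    (dickson 1 (1 : K) n).natDegree = n := by
  let := invertibleOfNonzero (two_ne_zero' K)
  rw [dickson_one_one_eq_chebyshev_T, ← C_ofNat, natDegree_C_mul two_ne_zero, natDegree_comp,
    Chebyshev.natDegree_T, natDegree_C_mul_X _ (by simp [two_ne_zero' K])]
  simp

open Topology in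
/-- Differentiate `T_M (z + z⁻¹) = z ^ M + z⁻¹ ^ M` at `z`. -/
theorem dickson_one_one_derivative_eval_add_inv_eq_zero_iff {𝕜 : Type*} [NontriviallyNormedField 𝕜]
    {M : ℕ} (hM : (M : 𝕜) ≠ 0) {z : 𝕜} (hz : z ≠ 0) (hz2 : z ^ 2 ≠ 1) :
    (dickson 1 (1 : 𝕜) M).derivative.eval (z + z⁻¹) = 0 ↔ z ^ (2 * M) = 1 := by
  set p := dickson 1 (1 : 𝕜) M
  have hF : HasDerivAt (fun w => p.eval (w + w⁻¹))
      (p.derivative.eval (z + z⁻¹) * (1 + -(z ^ 2)⁻¹)) z :=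
    (p.hasDerivAt _).comp z ((hasDerivAt_id z).add (hasDerivAt_inv hz))
  have hG : HasDerivAt (fun w => w ^ M + w⁻¹ ^ M)
      (M * z ^ (M - 1) + M * z⁻¹ ^ (M - 1) * -(z ^ 2)⁻¹) z :=
    (hasDerivAt_pow M z).add ((hasDerivAt_pow M z⁻¹).comp z (hasDerivAt_inv hz))
  have heq : (fun w => p.eval (w + w⁻¹)) =ᶠ[𝓝 z] fun w => w ^ M + w⁻¹ ^ M :=
    (eventually_ne_nhds hz).mono fun w hw =>
      dickson_one_one_eval_add_inv w w⁻¹ (mul_inv_cancel₀ hw) M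
  have hderiv := (hF.congr_of_eventuallyEq heq.symm).unique hG
  obtain ⟨k, rfl⟩ : ∃ k, M = k + 1 := Nat.exists_eq_add_one_of_ne_zero (by rintro rfl; simp at hM)
  have hz2' : z ^ 2 - 1 ≠ 0 := sub_ne_zero.mpr hz2
  generalize p.derivative.eval (z + z⁻¹) = D at hderiv ⊢
  push_cast at hderiv
  rw [inv_pow] at hderiv
  field_simp at hderiv
  have key : D * ((z ^ 2 - 1) * z ^ k) = (k + 1 : 𝕜) * (z ^ (2 * (k + 1)) - 1) := by
    linear_combination hderiv
  have hk : (k + 1 : 𝕜) ≠ 0 := by exact_mod_cast hM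
  constructor
  · intro h
    rw [h, zero_mul, eq_comm, mul_eq_zero] at key
    exact sub_eq_zero.mp (key.resolve_left hk)
  · intro h
    rw [h, sub_self, mul_zero, mul_eq_zero] at key
    exact key.resolve_right (mul_ne_zero hz2' (pow_ne_zero k hz))

theorem dickson_one_one_ne_C_mul_X_sub_C_pow_add_C {m : ℕ} (hm : 2 ≤ m) {l : ℂ} (hl : l ≠ 0)
    (a : ℂ) : dickson 1 (1 : ℂ) m ≠ C l * (X - C a) ^ m + C a := by
  intro h
  obtain ⟨ζ, hζ⟩ : ∃ ζ : ℂ, IsPrimitiveRoot ζ (2 * m) :=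
    ⟨_, Complex.isPrimitiveRoot_exp (2 * m) (by omega)⟩
  have hζ0 : ζ ≠ 0 := hζ.ne_zero (by omega)
  have hζm : ζ ^ m = -1 := by
    have h2 := hζ.pow_of_dvd (by omega) (dvd_mul_left m 2)
    rw [Nat.mul_div_cancel _ (by omega)] at h2
    exact h2.eq_neg_one_of_two_right
  have hζ2 : ζ ^ 2 ≠ 1 := hζ.pow_ne_one_of_pos_of_lt two_ne_zero (by omega)
  have hcrit := (dickson_one_one_derivative_eval_add_inv_eq_zero_iff (M := m)
    (Nat.cast_ne_zero.mpr (by omega)) hζ0 hζ2).mpr (by rw [mul_comm, pow_mul, hζm, neg_one_sq])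
  rw [h, derivative_eval_C_mul_X_sub_C_pow_add_C_eq_zero_iff hl hm] at hcrit
  have hval : (dickson 1 (1 : ℂ) m).eval (ζ + ζ⁻¹) = -2 := by
    rw [dickson_one_one_eval_add_inv _ _ (mul_inv_cancel₀ hζ0), inv_pow, hζm]
    norm_num
  rw [h, hcrit] at hval
  simp only [eval_add, eval_mul, eval_C, eval_pow, eval_sub, eval_X, sub_self,
    zero_pow (by omega : m ≠ 0), mul_zero, zero_add] at hval
  have hsq : (ζ + 1) ^ 2 = 0 := by
    rw [hval] at hcrit
    field_simp at hcrit
    linear_combination hcrit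
  rw [eq_neg_of_add_eq_zero_left (pow_eq_zero_iff two_ne_zero |>.mp hsq)] at hζ2
  norm_num at hζ2

theorem isAlgebraic_coeff_map_algebraMap {R A : Type*} [CommRing R] [Nontrivial R] [Ring A]
    [Algebra R A] (p : R[X]) (n : ℕ) : IsAlgebraic R ((p.map (algebraMap R A)).coeff n) := by
  rw [coeff_map]
  exact isAlgebraic_algebraMap _

end Polynomial

theorem exists_add_inv_eq {K : Type*} [Field K] [IsAlgClosed K] (c : K) :
    ∃ z, z ≠ 0 ∧ z + z⁻¹ = c := by
  obtain ⟨z, hz⟩ := IsAlgClosed.exists_root (C 1 * X ^ 2 + C (-c) * X + C 1 : K[X])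
    (by rw [degree_quadratic one_ne_zero]; decide)
  have hz' : z * z + 1 = c * z := by
    simp only [IsRoot, eval_add, eval_mul, eval_C, eval_pow, eval_X] at hz; linear_combination hz
  have hz0 : z ≠ 0 := by rintro rfl; simp at hz'
  exact ⟨z, hz0, by field_simp; linear_combination hz'⟩

open Filter Topology in
theorem greenFn_eq_zero_of_boundedOrbit {f : ℂ[X]} {z : ℂ} (hf : 1 < f.natDegree)
    (h : BoundedOrbit f z) : greenFn f z = 0 := by
  obtain ⟨M, hM⟩ := h
  have hd : (1 : ℝ) < f.natDegree := by exact_mod_cast hf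
  have hlim :
      Tendsto (fun n : ℕ => ((f.natDegree : ℝ) ^ n)⁻¹ * Real.log (max 1 M)) atTop (𝓝 0) := by
    simpa using (tendsto_inv_atTop_zero.comp (tendsto_pow_atTop_atTop_of_one_lt hd)).mul_const
      (Real.log (max 1 M))
  refine Tendsto.limUnder_eq (squeeze_zero (fun n => ?_) (fun n => ?_) hlim)
  · exact mul_nonneg (by positivity) (Real.log_nonneg (le_max_left _ _))
  · exact mul_le_mul_of_nonneg_left
      (Real.log_le_log (by positivity) (max_le_max le_rfl (hM n))) (by positivity)

theorem lyap_eq_log_natDegree {f : ℂ[X]} (hf : 1 < f.natDegree)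
    (h : ∀ c ∈ f.derivative.roots, BoundedOrbit f c) : lyap f = Real.log f.natDegree := by
  rw [lyap, Multiset.sum_eq_zero, add_zero]
  intro x hx
  obtain ⟨c, hc, rfl⟩ := Multiset.mem_map.mp hx
  exact greenFn_eq_zero_of_boundedOrbit hf (h c hc)

theorem lyap_X_pow {d : ℕ} (hd : 2 ≤ d) : lyap (X ^ d : ℂ[X]) = Real.log d := by
  conv_rhs => rw [← natDegree_X_pow (R := ℂ) d]
  refine lyap_eq_log_natDegree (f := X ^ d) (by rw [natDegree_X_pow]; omega)
    fun c hc => ⟨0, fun n => ?_⟩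
  have hd0 : d ≠ 0 := by omega
  have hc0 : c = 0 := by
    have := isRoot_of_mem_roots hc
    simp only [IsRoot, derivative_X_pow, eval_mul, eval_C, eval_pow, eval_X, mul_eq_zero,
      Nat.cast_eq_zero, hd0, false_or] at this
    exact pow_eq_zero_iff (by omega) |>.mp this
  rw [hc0, Function.iterate_fixed (by simp [hd0])]
  simp

theorem boundedOrbit_dickson_one_one_of_isRoot_derivative {d : ℕ} (hd : d ≠ 0) {c : ℂ}
    (hc : (dickson 1 (1 : ℂ) d).derivative.IsRoot c) : BoundedOrbit (dickson 1 1 d) c := by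
  obtain ⟨z, hz, rfl⟩ := exists_add_inv_eq c
  have hz1 : ‖z‖ = 1 := by
    by_cases hz2 : z ^ 2 = 1
    · exact Complex.norm_eq_one_of_pow_eq_one hz2 two_ne_zero
    · exact Complex.norm_eq_one_of_pow_eq_one
        ((dickson_one_one_derivative_eval_add_inv_eq_zero_iff (by exact_mod_cast hd) hz hz2).mp hc)
        (by omega)
  refine ⟨2, fun n => ?_⟩
  rw [iterate_eval_eq_eval_iterComp, iterComp_dickson_one_one,
    dickson_one_one_eval_add_inv _ _ (mul_inv_cancel₀ hz)]
  calc ‖z ^ d ^ n + z⁻¹ ^ d ^ n‖ ≤ ‖z ^ d ^ n‖ + ‖z⁻¹ ^ d ^ n‖ := norm_add_le _ _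
    _ = 2 := by rw [norm_pow, norm_pow, norm_inv, hz1]; norm_num

theorem lyap_dickson_one_one {d : ℕ} (hd : 2 ≤ d) : lyap (dickson 1 (1 : ℂ) d) = Real.log d := by
  conv_rhs => rw [← natDegree_dickson_one_one (K := ℂ) d]
  exact lyap_eq_log_natDegree (by rw [natDegree_dickson_one_one]; omega) fun c hc =>
    boundedOrbit_dickson_one_one_of_isRoot_derivative (by omega) (isRoot_of_mem_roots hc)

theorem not_intertwined_X_pow_dickson_one_one {d : ℕ} (hd : 2 ≤ d) :
    ¬ Intertwined (X ^ d : ℂ[X]) (dickson 1 1 d) := by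
  rintro ⟨n, S, h₁, h₂, hn, -, hh₁, hh₂, e₁, e₂⟩
  have hm : 2 ≤ d ^ n := hd.trans (Nat.le_self_pow hn.ne' d)
  rw [iterComp_X_pow] at e₁
  rw [iterComp_dickson_one_one] at e₂
  obtain ⟨l, a, hl, rfl⟩ := exists_eq_C_mul_X_sub_C_pow_add_C_of_X_pow_comp_eq_comp hm hh₁ e₁
  obtain ⟨β, b, hβ, hL⟩ := affineConj_C_mul_X_sub_C_pow_add_C hl hm
  set q := h₂.comp (C β * X + C b)
  have hq : 0 < q.natDegree := by
    rw [natDegree_comp, natDegree_add_C, natDegree_C_mul_X _ hβ, mul_one]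
    exact hh₂
  have hTq : (dickson 1 1 (d ^ n)).comp q = q.comp (X ^ d ^ n) := by
    rw [← comp_assoc, e₂, comp_assoc, hL, comp_assoc]
  obtain ⟨l', a', hl', hT⟩ := exists_eq_C_mul_X_sub_C_pow_add_C_of_comp_eq_comp_X_pow
    (by omega) (natDegree_dickson_one_one _) hq hTq
  exact dickson_one_one_ne_C_mul_X_sub_C_pow_add_C hm hl' a' hT

/-- For every `d ≥ 2` there exist `f, g ∈ ℚ̄[z]` of degree `d` with
`𝓛_f = 𝓛_g = log d` such that `f` and `g` are not intertwined and `f` and `ḡ` are not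
intertwined. -/
theorem exists_connected_not_intertwined (d : ℕ) (hd : 2 ≤ d) :
    ∃ f g : Polynomial ℂ, f.natDegree = d ∧ g.natDegree = d ∧
      (∀ n, IsAlgebraic ℚ (f.coeff n)) ∧ (∀ n, IsAlgebraic ℚ (g.coeff n)) ∧
      lyap f = Real.log (d : ℝ) ∧ lyap g = Real.log (d : ℝ) ∧
      ¬ Intertwined f g ∧ ¬ Intertwined f (conjPoly g) := by
  have hconj : conjPoly (dickson 1 (1 : ℂ) d) = dickson 1 1 d := by
    rw [conjPoly, map_dickson, map_one]
  refine ⟨X ^ d, dickson 1 1 d, natDegree_X_pow d, natDegree_dickson_one_one d, fun n => ?_,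
    fun n => ?_, lyap_X_pow hd, lyap_dickson_one_one hd, not_intertwined_X_pow_dickson_one_one hd,
    by rw [hconj]; exact not_intertwined_X_pow_dickson_one_one hd⟩
  · simpa using isAlgebraic_coeff_map_algebraMap (A := ℂ) (X ^ d : ℚ[X]) n
  · simpa [map_dickson] using isAlgebraic_coeff_map_algebraMap (A := ℂ) (dickson 1 (1 : ℚ) d) n
end
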